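/- arXiv:1906.10241 — 2 statements merged into one kernel-verified Lean document; each statement's English description precedes it below -/
import Mathlib

section
/- Let m be a fast sequence, Ē = (E_i) a sequence of graphs good for m with threshold i*, and ξ : ℕ → {0,1} a function with ξ⁻¹{1} infinite and ξ(i) = 0 for all i < i*; let T_k and R_k be as in the parameter construction. Then for every k ∈ ℕ, every ν ∈ T_k, every s ≤ k, and all ρ_0,…,ρ_{s−1} ∈ T_{k+1} such that (ν, ρ_i↾k) ∈ R_k for every i < s, the set { t < m(k) : (ν⌢⟨t⟩, ρ_i) ∈ R_{k+1} for every i < s } has at least k+1 elements. -/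
/-- `mCirc m i = ∏_{j<i} m j` (so `mCirc m 0 = 1`). -/
def mCirc (m : ℕ → ℕ) (i : ℕ) : ℕ := ∏ j ∈ Finset.range i, m j

/-- A *fast sequence* is `m : ℕ → ℕ` with `m 0 ≥ 2` and
`m i ≥ ((m°(i))^(i^i))^(4·(m°(i))^(i^i))` for all `i`. -/
def FastSeq (m : ℕ → ℕ) : Prop :=
  2 ≤ m 0 ∧ ∀ i, (mCirc m i ^ i ^ i) ^ (4 * mCirc m i ^ i ^ i) ≤ m i

/-- `Ē = (E_i)` is a *good sequence of graphs for `m` with threshold `i*`*. -/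
def GoodFor (m : ℕ → ℕ) (E : ∀ i : ℕ, Fin (m i) → Fin (m i) → Prop)
    (istar : ℕ) : Prop :=
  (∀ i, ∀ s t : Fin (m i), E i s t → E i t s) ∧
  (∀ s t : Fin (m 0), E 0 s t) ∧
  ∀ i, istar ≤ i →
    (∀ u : Finset (Fin (m i)), u.card ≤ mCirc m i ^ i ^ i →
      ∃ s : Fin (m i), ∀ t ∈ u, E i s t) ∧
    (∀ u : Finset (Fin (m i)), m i ≤ u.card * mCirc m i ^ i ^ i →
      ¬ ∃ s : Fin (m i), ∀ t ∈ u, E i s t)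

/-- The `k`-th level of the tree: sequences `η` of length `k` with `η j < m j`. -/
def TreeLevel (m : ℕ → ℕ) (k : ℕ) : Type := (j : Fin k) → Fin (m j)

/-- Restriction `η ↾ k` of a sequence of length `k+1`. -/
def restrict {m : ℕ → ℕ} {k : ℕ} (η : TreeLevel m (k + 1)) : TreeLevel m k :=
  fun j => η j.castSucc

/-- Extension `ν⌢⟨t⟩` of a sequence `ν` of length `k` by a last value `t < m k`. -/
def extendSeq {m : ℕ → ℕ} {k : ℕ} (ν : TreeLevel m k) (t : Fin (m k)) :
    TreeLevel m (k + 1) :=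
  Fin.snoc (α := fun j : Fin (k + 1) => Fin (m j)) ν t

/-- The relations `R_k` of the parameter construction:
`R_0` holds of the pair of empty sequences, and `(η₁,η₂) ∈ R_{k+1}` iff
`(η₁↾k, η₂↾k) ∈ R_k` and, in case `ξ k = 1`, additionally `(η₁ k, η₂ k) ∈ E_k`. -/
def Rrel (m : ℕ → ℕ) (E : ∀ i : ℕ, Fin (m i) → Fin (m i) → Prop)
    (ξ : ℕ → Bool) : ∀ k : ℕ, TreeLevel m k → TreeLevel m k → Prop
  | 0 => fun _ _ => True
  | k + 1 => fun η₁ η₂ =>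
      Rrel m E ξ k (restrict η₁) (restrict η₂) ∧
      (ξ k = true → E k (η₁ (Fin.last k)) (η₂ (Fin.last k)))

/-! When `ξ k = 0` every `t < m k` extends `ν`. When `ξ k = 1` we have `i* ≤ k`, and with
`X = (m°(k))^(k^k) ≥ k + 1` the extensions are the common `E_k`-neighbours of the at most
`s ≤ k < X` last values `ρ_i(k)`. If there were fewer than `X` of them, then by (ii) their
neighbourhoods, each of size `< m(k)/X`, would miss some `w`; but by (i) the fewer than `X` values
together with `w` have a common neighbour, which is one of them and adjacent to `w`. -/

open Finset

namespace FastSeq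

variable {m : ℕ → ℕ}

theorem pos (hm : FastSeq m) (j : ℕ) : 0 < m j := by
  induction j using Nat.strong_induction_on with
  | _ j ih =>
    rcases j with _ | j
    · exact two_pos.trans_le hm.1
    · have : 0 < mCirc m (j + 1) := prod_pos fun i hi => ih i (mem_range.mp hi)
      exact lt_of_lt_of_le (by positivity) (hm.2 (j + 1))

theorem mCirc_pow_le (hm : FastSeq m) (k : ℕ) : mCirc m k ^ k ^ k ≤ m k := by
  have : 0 < mCirc m k := prod_pos fun j _ => hm.pos j
  exact (Nat.le_self_pow (by positivity) _).trans (hm.2 k)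

theorem succ_le_mCirc_pow (hm : FastSeq m) (k : ℕ) : k + 1 ≤ mCirc m k ^ k ^ k := by
  rcases k with _ | j
  · simp [mCirc]
  · have h2 : 2 ≤ mCirc m (j + 1) :=
      hm.1.trans (single_le_prod' (fun i _ => hm.pos i) (by simp))
    calc j + 1 + 1 ≤ 2 ^ (j + 1) := Nat.lt_two_pow_self
      _ ≤ 2 ^ (j + 1) ^ (j + 1) := Nat.pow_le_pow_right two_pos (Nat.le_self_pow (by simp) _)
      _ ≤ mCirc m (j + 1) ^ (j + 1) ^ (j + 1) := Nat.pow_le_pow_left h2 _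

end FastSeq

theorem exists_forall_notMem_of_card_mul_le_card {α : Type*} [Fintype α] [Nonempty α]
    (N : α → Finset α) (X : ℕ) (hN : ∀ a, #(N a) * X ≤ Fintype.card α)
    (B : Finset α) (hB : #B < X) : ∃ w, ∀ b ∈ B, w ∉ N b := by
  classical
  have hcover : #(B.biUnion N) < #(univ : Finset α) := by
    refine Nat.lt_of_mul_lt_mul_right (a := X) ?_
    calc #(B.biUnion N) * X ≤ ∑ b ∈ B, #(N b) * X := by
          rw [← sum_mul]; exact Nat.mul_le_mul_right X card_biUnion_le
      _ ≤ #B * Fintype.card α := by simpa using sum_le_card_nsmul B _ _ fun b _ => hN b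
      _ < X * Fintype.card α := Nat.mul_lt_mul_of_pos_right hB Fintype.card_pos
      _ = #(univ : Finset α) * X := by rw [card_univ, mul_comm]
  obtain ⟨w, -, hw⟩ := exists_mem_notMem_of_card_lt_card hcover
  exact ⟨w, fun b hb hwb => hw (mem_biUnion.mpr ⟨b, hb, hwb⟩)⟩

theorem le_ncard_commonNeighbors_of_card_lt {α : Type*} [Fintype α] (E : α → α → Prop) (X : ℕ)
    (hext : ∀ u : Finset α, #u ≤ X → ∃ s, ∀ t ∈ u, E s t)
    (hsparse : ∀ u : Finset α, Fintype.card α ≤ #u * X → ¬ ∃ s, ∀ t ∈ u, E s t)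
    (v : Finset α) (hv : #v < X) : X ≤ {s | ∀ t ∈ v, E s t}.ncard := by
  classical
  obtain ⟨s₀, -⟩ := hext ∅ (Nat.zero_le X)
  have : Nonempty α := ⟨s₀⟩
  rw [Set.ncard_eq_toFinset_card']
  by_contra! hA
  have hN (a : α) : #{t | E a t} * X ≤ Fintype.card α :=
    (lt_of_not_ge fun h => hsparse _ h ⟨a, by simp⟩).le
  obtain ⟨w, hw⟩ := exists_forall_notMem_of_card_mul_le_card _ X hN _ hA
  obtain ⟨s, hs⟩ := hext (insert w v) ((card_insert_le w v).trans hv)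
  exact hw s (by simpa using fun t ht => hs t (mem_insert_of_mem ht))
    (by simpa using hs w (mem_insert_self w v))

section Tree

variable {m : ℕ → ℕ} {k : ℕ}

@[simp]
theorem restrict_extendSeq (ν : TreeLevel m k) (t : Fin (m k)) : restrict (extendSeq ν t) = ν :=
  funext fun _ => Fin.snoc_castSucc (α := fun j : Fin (k + 1) => Fin (m j)) ..

@[simp]
theorem extendSeq_last (ν : TreeLevel m k) (t : Fin (m k)) : extendSeq ν t (Fin.last k) = t :=
  Fin.snoc_last (α := fun j : Fin (k + 1) => Fin (m j)) ..

theorem Rrel_extendSeq_iff {E : ∀ i : ℕ, Fin (m i) → Fin (m i) → Prop} {ξ : ℕ → Bool}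
    {ν : TreeLevel m k} {ρ : TreeLevel m (k + 1)} (h : Rrel m E ξ k ν (restrict ρ))
    (t : Fin (m k)) :
    Rrel m E ξ (k + 1) (extendSeq ν t) ρ ↔ (ξ k = true → E k t (ρ (Fin.last k))) := by
  simp only [Rrel, restrict_extendSeq, extendSeq_last, h, true_and]

end Tree

theorem parameter_many_extensions_general (m : ℕ → ℕ) (hm : FastSeq m)
    (E : ∀ i : ℕ, Fin (m i) → Fin (m i) → Prop) (istar : ℕ)
    (hE : GoodFor m E istar) (ξ : ℕ → Bool)
    (hξ0 : ∀ i < istar, ξ i = false)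
    (k : ℕ) (ν : TreeLevel m k) (s : ℕ) (hs : s ≤ k)
    (ρ : Fin s → TreeLevel m (k + 1))
    (hρ : ∀ i : Fin s, Rrel m E ξ k ν (restrict (ρ i))) :
    k + 1 ≤ Set.ncard
      {t : Fin (m k) | ∀ i : Fin s, Rrel m E ξ (k + 1) (extendSeq ν t) (ρ i)} := by
  have hX := hm.succ_le_mCirc_pow k
  simp only [Rrel_extendSeq_iff (hρ _), ← imp_forall_iff]
  cases hξk : ξ k with
  | false => simpa using hX.trans (hm.mCirc_pow_le k)
  | true =>
    have hk : istar ≤ k := by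
      by_contra! hk
      simp [hξ0 k hk] at hξk
    obtain ⟨hext, hsparse⟩ := hE.2.2 k hk
    let v : Finset (Fin (m k)) := univ.image fun i => ρ i (Fin.last k)
    have hv : #v < mCirc m k ^ k ^ k :=
      lt_of_lt_of_le (Nat.lt_succ_of_le (card_image_le.trans (by simpa using hs))) hX
    have := le_ncard_commonNeighbors_of_card_lt (E k) _ hext (by simpa using hsparse) v hv
    simpa [v] using hX.trans this

/-- If `s ≤ k`, `ν ∈ T_k`, and `ρ_0,…,ρ_{s−1} ∈ T_{k+1}` with `(ν, ρ_i↾k) ∈ R_k`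
for all `i < s`, then the set `{t < m k : (ν⌢⟨t⟩, ρ_i) ∈ R_{k+1} for all i < s}`
has at least `k+1` elements. -/
theorem parameter_many_extensions (m : ℕ → ℕ) (hm : FastSeq m)
    (E : ∀ i : ℕ, Fin (m i) → Fin (m i) → Prop) (istar : ℕ)
    (hE : GoodFor m E istar) (ξ : ℕ → Bool)
    (hξinf : {i : ℕ | ξ i = true}.Infinite)
    (hξ0 : ∀ i < istar, ξ i = false)
    (k : ℕ) (ν : TreeLevel m k) (s : ℕ) (hs : s ≤ k)
    (ρ : Fin s → TreeLevel m (k + 1))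
    (hρ : ∀ i : Fin s, Rrel m E ξ k ν (restrict (ρ i))) :
    k + 1 ≤ Set.ncard
      {t : Fin (m k) | ∀ i : Fin s, Rrel m E ξ (k + 1) (extendSeq ν t) (ρ i)} :=
  parameter_many_extensions_general m hm E istar hE ξ hξ0 k ν s hs ρ hρ
end

section
/- Let κ be a regular uncountable cardinal, I an ideal on ℕ, and m a fast sequence. Suppose ℬ₁ ⋖ ℬ₂ are complete Boolean algebras, ℬ₁ has the (κ,I,m)-c.c., and the pair (ℬ₁,ℬ₂) has the (κ,I,m)-pattern transfer property. Then ℬ₂ has the (κ,I,m)-c.c. -/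
universe u v

/-- An ideal on `ℕ`: contains all finite sets, closed under subsets and finite
unions. -/
def IsIdealOnNat (I : Set (Set ℕ)) : Prop :=
  (∀ v : Set ℕ, v.Finite → v ∈ I) ∧ (∀ v ∈ I, ∀ w ⊆ v, w ∈ I) ∧
    (∀ v ∈ I, ∀ w ∈ I, v ∪ w ∈ I)

/-- A subset `S` of a complete Boolean algebra `B` is a complete subalgebra if it
contains `⊥` and is closed under complements, binary meets, and arbitrary suprema
(the latter computed in `B`; this is the meaning of `S ⋖ B`). -/
def IsCompleteSubalgebra {B : Type v} [CompleteBooleanAlgebra B] (S : Set B) : Prop :=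
  ⊥ ∈ S ∧ (∀ a ∈ S, aᶜ ∈ S) ∧ (∀ a ∈ S, ∀ b ∈ S, a ⊓ b ∈ S) ∧
    ∀ T ⊆ S, sSup T ∈ S

/-- The `κ`-c.c. for the (sub)algebra `S` of `B`: every antichain of nonzero
elements of `S` has cardinality `< κ`.  (Elements of `Set B` live in universe `v`,
so the cardinality is compared after lifting.) -/
def KappaCCOn (κ : Cardinal.{u}) {B : Type v} [CompleteBooleanAlgebra B]
    (S : Set B) : Prop :=
  ∀ A : Set B, A ⊆ S → (∀ a ∈ A, a ≠ ⊥) →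
    (A.Pairwise fun a b => a ⊓ b = ⊥) →
    Cardinal.lift.{u} (Cardinal.mk ↥A) < Cardinal.lift.{v} κ

/-- The `(κ, I, m)`-chain condition for the (sub)algebra `S` of the complete
Boolean algebra `B`.  The index set of ordinals below `κ` is represented by the
type `κ.ord.ToType`. -/
def CCCOn (κ : Cardinal.{u}) (I : Set (Set ℕ)) (m : ℕ → ℕ)
    {B : Type v} [CompleteBooleanAlgebra B] (S : Set B) : Prop :=
  ∀ U₂ : Set κ.ord.ToType, Cardinal.mk ↥U₂ = κ →
    ∀ a : κ.ord.ToType → B, (∀ α ∈ U₂, a α ∈ S ∧ a α ≠ ⊥) →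
      ∃ j : ℕ, ∃ U₁ ⊆ U₂, Cardinal.mk ↥U₁ = κ ∧ ∃ A ∈ I,
        ∀ n : ℕ, n ∉ A → ∀ u : Finset κ.ord.ToType, ↑u ⊆ U₁ →
          ∀ i : ℕ, i + j < n →
            m n < u.card * mCirc m n ^ n ^ i → u.card ≤ m n →
            ∃ v ⊆ u, u.card ≤ v.card * mCirc m n ^ n ^ (i + j) ∧
              v.inf a ≠ ⊥

/-- `a` is below the projection of `b` (relative to the subalgebra `S₁`):
every nonzero `c ∈ S₁` with `c ≤ a` satisfies `c ⊓ b ≠ ⊥`. -/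
def BelowProj {B : Type v} [CompleteBooleanAlgebra B] (S₁ : Set B) (a b : B) :
    Prop :=
  ∀ c ∈ S₁, c ≠ ⊥ → c ≤ a → c ⊓ b ≠ ⊥

/-- The pair `(S₁, S₂)` of subalgebras of `B` has the `(κ, I, m)`-pattern
transfer property. -/
def PatternTransfer (κ : Cardinal.{u}) (I : Set (Set ℕ)) (m : ℕ → ℕ)
    {B : Type v} [CompleteBooleanAlgebra B] (S₁ S₂ : Set B) : Prop :=
  IsCompleteSubalgebra S₁ ∧ IsCompleteSubalgebra S₂ ∧ S₁ ⊆ S₂ ∧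
  KappaCCOn κ S₁ ∧
  ∀ U₂ : Set κ.ord.ToType, Cardinal.mk ↥U₂ = κ →
    ∀ a2 : κ.ord.ToType → B, (∀ α ∈ U₂, a2 α ∈ S₂ ∧ a2 α ≠ ⊥) →
      (∀ α ∈ U₂, ∀ β ∈ U₂, a2 α = a2 β → α = β) →
      ∃ j : ℕ, ∃ U₁ ⊆ U₂, Cardinal.mk ↥U₁ = κ ∧ ∃ A ∈ I,
        ∃ a1 : κ.ord.ToType → B,
          (∀ α ∈ U₁, a1 α ∈ S₁ ∧ a1 α ≠ ⊥ ∧ BelowProj S₁ (a1 α) (a2 α)) ∧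
          ∀ n : ℕ, n ∉ A → ∀ i : ℕ, i + j < n →
            ∀ u : Finset κ.ord.ToType, ↑u ⊆ U₁ →
              m n < u.card * mCirc m n ^ n ^ i → u.card < m n →
              ∀ a ∈ S₁, a ≠ ⊥ → a ≤ u.inf a1 →
                ∃ v ⊆ u, u.card ≤ v.card * mCirc m n ^ n ^ (i + j) ∧
                  v.inf a2 ⊓ a ≠ ⊥

/-!
The family in `S₂` is first made injective: by regularity of `κ`, either some value is taken
`κ` times (and a constant family trivially has the pattern) or a transversal of size `κ` exists.
Pattern transfer then yields witnesses `a1 α ∈ S₁` below the projections of the `a α`, and the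
chain condition of `S₁` applied to them gives, for a finite `u`, a large `v₁ ⊆ u` with
`v₁.inf a1 ≠ ⊥`. Halving `v₁` if necessary to get below `m n`, the transfer property applied
to `v₁.inf a1` finds a large `v` with `v.inf a ≠ ⊥`. The chain condition, the halving and the
transfer each lose a factor `mCirc m n ^ n ^ k`; since `n ≥ 2`, two such factors with exponents
below `k + 1` are absorbed by the single factor `mCirc m n ^ n ^ (k + 1)`.
-/

open Cardinal

namespace FastSeq

variable {m : ℕ → ℕ}

lemma two_le_of_two_pow_le_mCirc (hm : FastSeq m) {i : ℕ} (hi : 2 ^ i ≤ mCirc m i) :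
    2 ≤ m i := by
  rcases i.eq_zero_or_pos with rfl | hpos
  · exact hm.1
  have hbase : 2 ≤ mCirc m i ^ i ^ i :=
    ((Nat.le_self_pow hpos.ne' 2).trans hi).trans (Nat.le_self_pow (by positivity) _)
  exact hbase.trans ((Nat.le_self_pow (by positivity) _).trans (hm.2 i))

lemma two_pow_le_mCirc (hm : FastSeq m) (i : ℕ) : 2 ^ i ≤ mCirc m i := by
  induction i with
  | zero => simp [mCirc]
  | succ i ih =>
    rw [mCirc, Finset.prod_range_succ, pow_succ]
    exact Nat.mul_le_mul ih (hm.two_le_of_two_pow_le_mCirc ih)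

lemma two_le (hm : FastSeq m) (i : ℕ) : 2 ≤ m i :=
  hm.two_le_of_two_pow_le_mCirc (hm.two_pow_le_mCirc i)

lemma two_le_mCirc (hm : FastSeq m) {n : ℕ} (hn : n ≠ 0) : 2 ≤ mCirc m n :=
  (Nat.le_self_pow hn 2).trans (hm.two_pow_le_mCirc n)

end FastSeq

lemma le_mul_pow_pow_of_le_mul_pow_pow {P n x y z k l J : ℕ} (hP : 0 < P) (hn : 2 ≤ n)
    (hk : k < J) (hl : l < J) (hxy : x ≤ y * P ^ n ^ k) (hyz : y ≤ z * P ^ n ^ l) :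
    x ≤ z * P ^ n ^ J := by
  obtain ⟨J, rfl⟩ : ∃ J', J = J' + 1 := ⟨J - 1, by omega⟩
  have hexp : n ^ l + n ^ k ≤ n ^ (J + 1) := by
    have hkJ := Nat.pow_le_pow_right (n := n) (by omega) (Nat.le_of_lt_succ hk)
    have hlJ := Nat.pow_le_pow_right (n := n) (by omega) (Nat.le_of_lt_succ hl)
    rw [pow_succ]
    linarith [Nat.mul_le_mul_left (n ^ J) hn]
  calc x ≤ y * P ^ n ^ k := hxy
    _ ≤ z * P ^ n ^ l * P ^ n ^ k := Nat.mul_le_mul_right _ hyz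
    _ = z * P ^ (n ^ l + n ^ k) := by ring
    _ ≤ z * P ^ n ^ (J + 1) := Nat.mul_le_mul_left _ (Nat.pow_le_pow_right hP hexp)

lemma Finset.exists_subset_card_lt_and_card_le_two_mul {α : Type*} (s : Finset α) {M : ℕ}
    (hM : 2 ≤ M) (hs : s.card ≤ M) : ∃ t ⊆ s, t.card < M ∧ s.card ≤ 2 * t.card := by
  obtain ⟨t, hts, ht⟩ := s.exists_subset_card_eq (n := s.card - s.card / 2) (by omega)
  exact ⟨t, hts, by omega, by omega⟩

theorem Cardinal.IsRegular.exists_fiber_or_injOn {κ : Cardinal.{u}} (hκ : κ.IsRegular)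
    {ι : Type u} {β : Type*} {U : Set ι} (hU : #U = κ) (f : ι → β) :
    (∃ b, #↥(U ∩ f ⁻¹' {b}) = κ) ∨ ∃ V ⊆ U, #V = κ ∧ V.InjOn f := by
  obtain ⟨V, hVU, hV⟩ := U.exists_subset_bijOn f
  rcases (hU ▸ mk_le_mk_of_subset hVU : #V ≤ κ).lt_or_eq with hlt | heq
  · left
    by_contra! hsmall
    have hcover : U ⊆ ⋃ γ ∈ V, U ∩ f ⁻¹' {f γ} := fun α hα => by
      obtain ⟨γ, hγ, hfγ⟩ : f α ∈ f '' V := hV.image_eq ▸ Set.mem_image_of_mem f hα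
      exact Set.mem_biUnion hγ ⟨hα, hfγ.symm⟩
    have hunion : #↥(⋃ γ ∈ V, U ∩ f ⁻¹' {f γ}) < κ :=
      (card_biUnion_lt_iff_forall_of_isRegular hκ hlt).2 fun γ _ =>
        ((mk_le_mk_of_subset Set.inter_subset_left).trans hU.le).lt_of_ne (hsmall _)
    exact ((mk_le_mk_of_subset hcover).trans_lt hunion).ne hU
  · exact Or.inr ⟨V, hVU, heq, hV.injOn⟩

lemma IsCompleteSubalgebra.finset_inf_mem {B : Type v} [CompleteBooleanAlgebra B] {S : Set B}
    (hS : IsCompleteSubalgebra S) {ι : Type*} {s : Finset ι} {f : ι → B}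
    (hf : ∀ x ∈ s, f x ∈ S) : s.inf f ∈ S :=
  Finset.inf_induction (compl_bot (α := B) ▸ hS.2.1 ⊥ hS.1)
    (fun _ ha _ hb => hS.2.2.1 _ ha _ hb) hf

section Pattern

variable {κ : Cardinal.{u}} {I : Set (Set ℕ)} {m : ℕ → ℕ} {ι : Type u}
  {B : Type v} [CompleteBooleanAlgebra B]

/-- The conclusion of the `(κ, I, m)`-c.c. for the single family `a` indexed by `U`. -/
def HasPattern (κ : Cardinal.{u}) (I : Set (Set ℕ)) (m : ℕ → ℕ) (a : ι → B) (U : Set ι) :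
    Prop :=
  ∃ j : ℕ, ∃ U₁ ⊆ U, #↥U₁ = κ ∧ ∃ A ∈ I,
    ∀ n : ℕ, n ∉ A → ∀ u : Finset ι, ↑u ⊆ U₁ → ∀ i : ℕ, i + j < n →
      m n < u.card * mCirc m n ^ n ^ i → u.card ≤ m n →
      ∃ v ⊆ u, u.card ≤ v.card * mCirc m n ^ n ^ (i + j) ∧ v.inf a ≠ ⊥

lemma HasPattern.mono {a : ι → B} {U V : Set ι} (h : HasPattern κ I m a U) (hUV : U ⊆ V) :
    HasPattern κ I m a V :=
  let ⟨j, U₁, hU₁, rest⟩ := h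
  ⟨j, U₁, hU₁.trans hUV, rest⟩

lemma hasPattern_of_eq_const (hI : IsIdealOnNat I) {a : ι → B} {U : Set ι} {b : B}
    (hU : #U = κ) (hb : b ≠ ⊥) (ha : ∀ α ∈ U, a α = b) : HasPattern κ I m a U := by
  refine ⟨0, U, subset_rfl, hU, ∅, hI.1 ∅ Set.finite_empty, fun n _ u hu i _ hmu _ => ?_⟩
  obtain ⟨hu_pos, hpow_pos⟩ := CanonicallyOrderedAdd.mul_pos.1 ((Nat.zero_le _).trans_lt hmu)
  refine ⟨u, subset_rfl, Nat.le_mul_of_pos_right _ hpow_pos, ?_⟩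
  rwa [Finset.inf_congr rfl fun α hα => ha α (hu hα),
    Finset.inf_const (Finset.card_pos.1 hu_pos)]

lemma exists_subset_inf_ne_bot_of_transfer (hm : FastSeq m) {S₁ : Set B}
    (hS₁ : IsCompleteSubalgebra S₁) {a1 a2 : ι → B} {n i jcc jpt : ℕ} {u : Finset ι}
    (hn : i + (jpt + jcc + 3) < n) (hmu : m n < u.card * mCirc m n ^ n ^ i) (hum : u.card ≤ m n)
    (ha1 : ∀ α ∈ u, a1 α ∈ S₁)
    (hcc : ∃ v ⊆ u, u.card ≤ v.card * mCirc m n ^ n ^ (i + jcc) ∧ v.inf a1 ≠ ⊥)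
    (hpt : ∀ i', i' + jpt < n → ∀ w ⊆ u, m n < w.card * mCirc m n ^ n ^ i' → w.card < m n →
      ∀ a ∈ S₁, a ≠ ⊥ → a ≤ w.inf a1 →
        ∃ v ⊆ w, w.card ≤ v.card * mCirc m n ^ n ^ (i' + jpt) ∧ v.inf a2 ⊓ a ≠ ⊥) :
    ∃ v ⊆ u, u.card ≤ v.card * mCirc m n ^ n ^ (i + (jpt + jcc + 3)) ∧ v.inf a2 ≠ ⊥ := by
  have hP : 2 ≤ mCirc m n := hm.two_le_mCirc (by omega)
  have hn2 : 2 ≤ n := by omega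
  obtain ⟨v₁, hv₁u, huv₁, hv₁inf⟩ := hcc
  -- the transfer property needs a set of size `< m n`, the chain condition only gives `≤ m n`
  obtain ⟨v₂, hv₂v₁, hv₂m, hv₁v₂⟩ :=
    v₁.exists_subset_card_lt_and_card_le_two_mul (hm.two_le n)
      ((Finset.card_le_card hv₁u).trans hum)
  have hv₁v₂' : v₁.card ≤ v₂.card * mCirc m n ^ n ^ 0 := by
    rw [pow_zero, pow_one]
    nlinarith
  have huv₂ : u.card ≤ v₂.card * mCirc m n ^ n ^ (i + jcc + 1) :=
    le_mul_pow_pow_of_le_mul_pow_pow (by omega) hn2 (by omega) (by omega) huv₁ hv₁v₂'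
  have hmv₂ : m n + 1 ≤ v₂.card * mCirc m n ^ n ^ (i + jcc + 2) :=
    le_mul_pow_pow_of_le_mul_pow_pow (by omega) hn2 (by omega) (by omega) hmu huv₂
  have hv₂S : v₂.inf a1 ∈ S₁ := hS₁.finset_inf_mem fun α hα => ha1 α (hv₁u (hv₂v₁ hα))
  have hv₂inf : v₂.inf a1 ≠ ⊥ := ne_bot_of_le_ne_bot hv₁inf (Finset.inf_mono hv₂v₁)
  obtain ⟨v, hvv₂, hv₂v, hvinf⟩ :=
    hpt (i + jcc + 2) (by omega) v₂ (hv₂v₁.trans hv₁u) hmv₂ hv₂m _ hv₂S hv₂inf le_rfl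
  exact ⟨v, hvv₂.trans (hv₂v₁.trans hv₁u),
    le_mul_pow_pow_of_le_mul_pow_pow (by omega) hn2 (by omega) (by omega) huv₂ hv₂v,
    ne_bot_of_le_ne_bot hvinf inf_le_left⟩

lemma HasPattern.transfer (hm : FastSeq m) (hI : IsIdealOnNat I) {S₁ : Set B}
    (hS₁ : IsCompleteSubalgebra S₁) {a1 a2 : ι → B} {U : Set ι} {jpt : ℕ} {Apt : Set ℕ}
    (hApt : Apt ∈ I) (ha1 : ∀ α ∈ U, a1 α ∈ S₁)
    (hpt : ∀ n : ℕ, n ∉ Apt → ∀ i : ℕ, i + jpt < n → ∀ u : Finset ι, ↑u ⊆ U →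
      m n < u.card * mCirc m n ^ n ^ i → u.card < m n → ∀ a ∈ S₁, a ≠ ⊥ → a ≤ u.inf a1 →
        ∃ v ⊆ u, u.card ≤ v.card * mCirc m n ^ n ^ (i + jpt) ∧ v.inf a2 ⊓ a ≠ ⊥)
    (hcc : HasPattern κ I m a1 U) : HasPattern κ I m a2 U := by
  obtain ⟨jcc, U₁, hU₁U, hU₁, Acc, hAcc, hcc⟩ := hcc
  refine ⟨jpt + jcc + 3, U₁, hU₁U, hU₁, Apt ∪ Acc, hI.2.2 _ hApt _ hAcc,
    fun n hn u hu i hin hmu hum => ?_⟩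
  rw [Set.mem_union, not_or] at hn
  exact exists_subset_inf_ne_bot_of_transfer hm hS₁ hin hmu hum
    (fun α hα => ha1 α (hU₁U (hu hα))) (hcc n hn.2 u hu i (by omega) hmu hum)
    fun i' hi' w hw => hpt n hn.1 i' hi' w ((Finset.coe_subset.2 hw).trans (hu.trans hU₁U))

end Pattern

theorem ccc_of_patternTransfer_general (κ : Cardinal.{u})
    (hreg : κ.IsRegular)
    (I : Set (Set ℕ)) (hI : IsIdealOnNat I) (m : ℕ → ℕ) (hm : FastSeq m)
    {B : Type v} [CompleteBooleanAlgebra B] (S₁ S₂ : Set B)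
    (hcc : CCCOn κ I m S₁) (hpt : PatternTransfer κ I m S₁ S₂) :
    CCCOn κ I m S₂ := by
  intro U₂ hU₂ a ha
  show HasPattern κ I m a U₂
  rcases hreg.exists_fiber_or_injOn hU₂ a with ⟨b, hb⟩ | ⟨U, hUU₂, hU, hinj⟩
  · obtain ⟨α, hαU₂, hαb⟩ : (U₂ ∩ a ⁻¹' {b}).Nonempty := by
      rw [← Set.nonempty_coe_sort, ← mk_ne_zero_iff, hb]
      exact hreg.ne_zero
    have hb_ne : b ≠ ⊥ := hαb ▸ (ha α hαU₂).2
    exact (hasPattern_of_eq_const hI hb hb_ne fun β hβ => hβ.2).mono Set.inter_subset_left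
  · obtain ⟨jpt, Up, hUpU, hUp, Apt, hApt, a1, ha1, htransfer⟩ :=
      hpt.2.2.2.2 U hU a (fun α hα => ha α (hUU₂ hα)) fun α hα β hβ => hinj hα hβ
    have hcc₁ : HasPattern κ I m a1 Up :=
      hcc Up hUp a1 fun α hα => ⟨(ha1 α hα).1, (ha1 α hα).2.1⟩
    exact (hcc₁.transfer hm hI hpt.1 hApt (fun α hα => (ha1 α hα).1) htransfer).mono
      (hUpU.trans hUU₂)

/-- (Observation 7.13.)  If `ℬ₁ ⋖ ℬ₂` are complete Boolean algebras (represented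
as complete subalgebras `S₁ ⊆ S₂` of `B`), `S₁` has the `(κ,I,m)`-c.c., and the
pair `(S₁,S₂)` has the `(κ,I,m)`-pattern transfer property, then `S₂` has the
`(κ,I,m)`-c.c. -/
theorem ccc_of_patternTransfer (κ : Cardinal.{u})
    (hreg : κ.IsRegular) (hunc : Cardinal.aleph0 < κ)
    (I : Set (Set ℕ)) (hI : IsIdealOnNat I) (m : ℕ → ℕ) (hm : FastSeq m)
    {B : Type v} [CompleteBooleanAlgebra B] (S₁ S₂ : Set B)
    (hcc : CCCOn κ I m S₁) (hpt : PatternTransfer κ I m S₁ S₂) :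
    CCCOn κ I m S₂ :=
  ccc_of_patternTransfer_general κ hreg I hI m hm S₁ S₂ hcc hpt
end
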